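/- arXiv:2005.05583 — 5 statements merged into one kernel-verified Lean document; each statement's English description precedes it below -/
import Mathlib

section
/- Let K be an algebraically closed field and let L/K be a field extension. Suppose there exist a field extension K'/K, a finitely generated commutative K'-algebra A, and an injective homomorphism of K'-algebras from K' ⊗_K L into A. Then L = K, i.e. the field extension L/K is trivial (the structure map K → L is bijective). -/
/-!
If `t ∈ L` were transcendental over `K`, then `X ↦ 1 ⊗ t` would embed `K'[X]` into the finitely
generated `K'`-algebra `A`, and `X - a` would become a unit in `A` for each of the infinitely many
`a ∈ K`. This is impossible: for a finitely generated algebra `A` over an integrally closed domain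
`R` into which `R` injects, there is `h ≠ 0` in `R` such that every `g ∈ R` that becomes a unit in
`A` divides a power of `h`. To find `h`, map `A` to a residue field `F` of the generic fibre
`Frac R ⊗[R] A`; by the Nullstellensatz `F` is finite over `Frac R`, so a single denominator `h`
makes the images of the generators of `A` integral over `R`, and then `h ^ N / g` is integral over
`R` whenever `g⁻¹` exists in `A`. Hence every `c ∈ K'` with `X - c` a unit in `A` is a root of `h`,
so `L/K` is algebraic, and `L = K` as `K` is algebraically closed.
-/

open scoped TensorProduct
open Polynomial

theorem Transcendental.one_tmul {R S A : Type*} [CommRing R] [CommRing S] [Algebra R S]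
    [Module.Flat R S] [CommRing A] [Algebra R A] {t : A} (ht : Transcendental R t) :
    Transcendental S ((1 : S) ⊗ₜ[R] t) := by
  have hfactor : Polynomial.aeval ((1 : S) ⊗ₜ[R] t) =
      (Algebra.TensorProduct.map (AlgHom.id S S) (Polynomial.aeval t)).comp
        (polyEquivTensor' R S).toAlgHom :=
    Polynomial.algHom_ext (by simp [polyEquivTensor_apply])
  rw [transcendental_iff_injective, hfactor]
  exact (Module.Flat.lTensor_preserves_injective_linearMap (M := S)
    (Polynomial.aeval t).toLinearMap (transcendental_iff_injective.mp ht)).comp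
    (polyEquivTensor' R S).injective

theorem exists_isIntegral_pow_smul_of_mem_adjoin {R F : Type*} [CommRing R] [CommRing F]
    [Algebra R F] {y : R} {s : Set F} (hs : ∀ z ∈ s, IsIntegral R (y • z)) {x : F}
    (hx : x ∈ Algebra.adjoin R s) : ∃ N : ℕ, IsIntegral R (y ^ N • x) := by
  induction hx using Algebra.adjoin_induction with
  | mem z hz => exact ⟨1, by simpa using hs z hz⟩
  | algebraMap r => exact ⟨0, by simpa using isIntegral_algebraMap⟩
  | add a b _ _ ha hb =>
    obtain ⟨Na, ha⟩ := ha
    obtain ⟨Nb, hb⟩ := hb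
    refine ⟨Na + Nb, ?_⟩
    convert (ha.smul (y ^ Nb)).add (hb.smul (y ^ Na)) using 1
    module
  | mul a b _ _ ha hb =>
    obtain ⟨Na, ha⟩ := ha
    obtain ⟨Nb, hb⟩ := hb
    refine ⟨Na + Nb, ?_⟩
    rw [pow_add, ← smul_mul_smul_comm]
    exact ha.mul hb

theorem dvd_of_mul_eq_one_of_isIntegral_smul {R κ F : Type*} [CommRing R] [IsDomain R]
    [IsIntegrallyClosed R] [Field κ] [Algebra R κ] [IsFractionRing R κ] [CommRing F]
    [Nontrivial F] [Algebra R F] [Algebra κ F] [IsScalarTower R κ F] {g h : R} {w : F}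
    (hw : algebraMap R F g * w = 1) (hint : IsIntegral R (h • w)) : g ∣ h := by
  rw [IsScalarTower.algebraMap_apply R κ F] at hw
  have hg : algebraMap R κ g ≠ 0 := by
    intro hg
    rw [hg, map_zero, zero_mul] at hw
    exact zero_ne_one hw
  have hq : algebraMap κ F (algebraMap R κ h / algebraMap R κ g) = h • w := by
    have hinv : algebraMap κ F (algebraMap R κ g)⁻¹ = w := by
      refine left_inv_eq_right_inv ?_ hw
      rw [← map_mul, inv_mul_cancel₀ hg, map_one]
    rw [div_eq_mul_inv, map_mul, hinv, ← IsScalarTower.algebraMap_apply, Algebra.smul_def]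
  obtain ⟨p, hp⟩ := IsIntegrallyClosed.isIntegral_iff.mp <|
    (isIntegral_algHom_iff (IsScalarTower.toAlgHom R κ F) (algebraMap κ F).injective).mp
      (hq ▸ hint)
  refine ⟨p, IsFractionRing.injective R κ ?_⟩
  rw [map_mul, hp, mul_div_cancel₀ _ hg]

theorem exists_ne_zero_forall_isUnit_imp_dvd_pow {R A : Type*} [CommRing R] [IsDomain R]
    [IsIntegrallyClosed R] [CommRing A] [Algebra R A] [Algebra.FiniteType R A]
    (hinj : Function.Injective (algebraMap R A)) :
    ∃ h : R, h ≠ 0 ∧ ∀ g : R, IsUnit (algebraMap R A g) → ∃ n : ℕ, g ∣ h ^ n := by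
  classical
  let κ := FractionRing R
  have : Nontrivial (κ ⊗[R] A) :=
    Algebra.TensorProduct.nontrivial_of_algebraMap_injective_of_flat_left R κ A hinj
  -- `F` is a residue field of the generic fibre, finite over `κ` by the Nullstellensatz.
  obtain ⟨M, hM⟩ := Ideal.exists_maximal (κ ⊗[R] A)
  let F := κ ⊗[R] A ⧸ M
  let _ : Field F := Ideal.Quotient.field M
  have : Algebra.FiniteType κ F := .trans (S := κ ⊗[R] A) inferInstance inferInstance
  have : Module.Finite κ F := finite_of_finite_type_of_isJacobsonRing κ F
  have : Algebra.IsAlgebraic R F :=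
    (IsFractionRing.comap_isAlgebraic_iff (K := κ)).mpr (Algebra.IsAlgebraic.of_finite κ F)
  let ψ : A →ₐ[R] F := (Ideal.Quotient.mkₐ R M).comp Algebra.TensorProduct.includeRight
  obtain ⟨s, hs⟩ := Algebra.FiniteType.out (R := R) (A := A)
  obtain ⟨h, hh, hint⟩ := Algebra.IsAlgebraic.exists_integral_multiples R (s.image ψ)
  refine ⟨h, hh, fun g ⟨u, hu⟩ => ?_⟩
  have hψ : ∀ a : A, ψ a ∈ Algebra.adjoin R ((s.image ψ : Finset F) : Set F) := by
    intro a
    rw [Finset.coe_image, Algebra.adjoin_image, hs]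
    exact ⟨a, trivial, rfl⟩
  obtain ⟨N, hN⟩ := exists_isIntegral_pow_smul_of_mem_adjoin hint (hψ ↑u⁻¹)
  refine ⟨N, dvd_of_mul_eq_one_of_isIntegral_smul (κ := κ) (w := ψ ↑u⁻¹) ?_ hN⟩
  rw [← ψ.commutes, ← map_mul, ← hu, Units.mul_inv, map_one]

theorem Polynomial.finite_setOf_isUnit_map_X_sub_C {k A : Type*} [Field k] [CommRing A]
    [Algebra k A] [Algebra.FiniteType k A] (φ : k[X] →ₐ[k] A) (hφ : Function.Injective φ) :
    {c : k | IsUnit (φ (X - C c))}.Finite := by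
  let _ : Algebra k[X] A := φ.toAlgebra
  have : IsScalarTower k k[X] A := .of_algebraMap_eq fun c => (φ.commutes c).symm
  have : Algebra.FiniteType k[X] A := .of_restrictScalars_finiteType k k[X] A
  obtain ⟨h, hh, hdvd⟩ := exists_ne_zero_forall_isUnit_imp_dvd_pow (R := k[X]) (A := A) hφ
  refine (finite_setOfPred_isRoot hh).subset fun c hc => ?_
  obtain ⟨n, hn⟩ := hdvd _ hc
  exact IsNilpotent.eq_zero ⟨n, by rw [← eval_pow]; exact dvd_iff_isRoot.mp hn⟩

/-- Let `K` be an algebraically closed field and `L/K` a field extension. If there exist a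
field extension `K'/K`, a finitely generated commutative `K'`-algebra `A`, and an injective
`K'`-algebra homomorphism `K' ⊗[K] L → A`, then the extension `L/K` is trivial, i.e. the
structure map `K → L` is bijective. -/
theorem stmt_0 (K L K' A : Type*) [Field K] [IsAlgClosed K]
    [Field L] [Algebra K L] [Field K'] [Algebra K K']
    [CommRing A] [Algebra K' A] [Algebra.FiniteType K' A]
    (f : (K' ⊗[K] L) →ₐ[K'] A) (hf : Function.Injective f) :
    Function.Bijective (algebraMap K L) := by
  suffices Algebra.IsIntegral K L from IsAlgClosed.algebraMap_bijective_of_isIntegral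
  refine ⟨fun t => ?_⟩
  by_contra ht
  have htr : Transcendental K t := fun halg => ht halg.isIntegral
  let φ : K'[X] →ₐ[K'] A := f.comp (aeval ((1 : K') ⊗ₜ[K] t))
  have hφ : Function.Injective φ :=
    hf.comp (transcendental_iff_injective.mp htr.one_tmul)
  refine (Set.infinite_range_of_injective (algebraMap K K').injective).mono ?_
    (Polynomial.finite_setOf_isUnit_map_X_sub_C φ hφ)
  rintro _ ⟨a, rfl⟩
  have hne : t - algebraMap K L a ≠ 0 := sub_ne_zero.mpr fun h => ht (h ▸ isIntegral_algebraMap)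
  have : φ (X - C (algebraMap K K' a)) =
      f (Algebra.TensorProduct.includeRight (t - algebraMap K L a)) := by
    simp [φ, Algebra.TensorProduct.algebraMap_apply, TensorProduct.tmul_sub,
      Algebra.TensorProduct.tmul_one_eq_one_tmul]
  rw [Set.mem_ofPred_eq, this]
  exact ((isUnit_iff_ne_zero.mpr hne).map _).map _
end

section
/- Let K' be an algebraically closed field and let K ⊆ K' be a subfield which is itself algebraically closed (in particular infinite). Let A be a finitely generated commutative K'-algebra and let a ∈ A be an element such that a − t·1 is a unit of A for every t ∈ K. Then there exists a nonzero polynomial p ∈ K'[X] such that p(a) is nilpotent in A; equivalently, there exist finitely many elements a₁, …, a_r ∈ K' and an integer N ≥ 1 such that (∏_{i=1}^r (a − a_i·1))^N = 0 in A. -/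
/-!
By Chevalley's theorem the image `s` of `Spec A → Spec K'[X]`, induced by `X ↦ a`, is
constructible, so `s` either contains a nonempty basic open `D(f)` or misses the generic point and
then lies in a proper closed set `V(g)`. In the first case every `t ∈ K'` with `f(t) ≠ 0` has
`(X - t) ∈ s`, so `a - t` lies in a prime of `A` and is not a unit; this excludes all but finitely
many `t`, which is impossible as `K` is infinite. In the second case `g(a)` lies in every prime of
`A`, hence is nilpotent.
-/

open Polynomial PrimeSpectrum Topology

namespace PrimeSpectrum

theorem not_isUnit_of_mem_range_comap {R S : Type*} [CommRing R] [CommRing S] {φ : R →+* S}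
    {P : PrimeSpectrum R} (hP : P ∈ Set.range (comap φ)) {r : R} (hr : r ∈ P.asIdeal) :
    ¬ IsUnit (φ r) := by
  obtain ⟨Q, rfl⟩ := hP
  exact fun hu => Q.isPrime.ne_top (Ideal.eq_top_of_isUnit_mem _ hr hu)

variable {R : Type*} [CommRing R] [IsDomain R] {s : Set (PrimeSpectrum R)}

theorem exists_basicOpen_subset_of_isConstructible (hs : IsConstructible s) (hbot : ⊥ ∈ s) :
    ∃ f : R, f ≠ 0 ∧ (basicOpen f : Set (PrimeSpectrum R)) ⊆ s := by
  obtain ⟨S, rfl⟩ := exists_constructibleSetData_iff.mpr hs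
  simp only [ConstructibleSetData.toSet, Set.mem_iUnion] at hbot
  obtain ⟨C, hC, hgen, hf⟩ := hbot
  have hg : ∀ i, C.g i = 0 := by simpa [Set.range_subset_iff] using hgen
  refine ⟨C.f, fun h => hf (by simp [h]), fun x hx => Set.mem_biUnion hC ⟨?_, ?_⟩⟩
  · simp [Set.range_subset_iff, hg]
  · simpa [basicOpen_eq_zeroLocus_compl] using hx

theorem exists_subset_zeroLocus_of_isConstructible (hs : IsConstructible s) (hbot : ⊥ ∉ s) :
    ∃ g : R, g ≠ 0 ∧ s ⊆ zeroLocus {g} := by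
  obtain ⟨g, hg, hsub⟩ := exists_basicOpen_subset_of_isConstructible hs.compl hbot
  refine ⟨g, hg, fun x hx => ?_⟩
  rw [mem_zeroLocus, Set.singleton_subset_iff]
  by_contra hgx
  exact hsub ((mem_basicOpen g x).mpr hgx) hx

end PrimeSpectrum

namespace Polynomial

theorem isConstructible_range_comap_aeval {k A : Type*} [CommRing k] [IsNoetherianRing k]
    [CommRing A] [Algebra k A] [Algebra.FiniteType k A] (a : A) :
    IsConstructible (Set.range (comap (aeval a : k[X] →ₐ[k] A).toRingHom)) := by
  refine isConstructible_range_comap (RingHom.FinitePresentation.of_finiteType.mp ?_)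
  refine RingHom.FiniteType.of_comp_finiteType (f := algebraMap k k[X]) ?_
  convert RingHom.finiteType_algebraMap.mpr ‹Algebra.FiniteType k A›
  exact (aeval a).comp_algebraMap

theorem exists_isNilpotent_aeval_of_infinite_setOf_isUnit {k A : Type*} [Field k] [CommRing A]
    [Algebra k A] [Algebra.FiniteType k A] (a : A)
    (h : {t : k | IsUnit (a - algebraMap k A t)}.Infinite) :
    ∃ p : k[X], p ≠ 0 ∧ IsNilpotent (aeval a p) := by
  set φ := (aeval a : k[X] →ₐ[k] A).toRingHom
  by_cases hbot : ⊥ ∈ Set.range (comap φ)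
  · obtain ⟨f, hf0, hf⟩ := exists_basicOpen_subset_of_isConstructible
      (isConstructible_range_comap_aeval a) hbot
    refine absurd ((finite_setOfPred_isRoot hf0).subset fun t ht => ?_) h
    by_contra hft
    let P : PrimeSpectrum k[X] := ⟨RingHom.ker (evalRingHom t), RingHom.ker_isPrime _⟩
    refine not_isUnit_of_mem_range_comap (hf (show P ∈ basicOpen f from hft)) (r := X - C t)
      (by simp [P]) ?_
    simpa [φ] using ht
  · obtain ⟨g, hg0, hg⟩ := exists_subset_zeroLocus_of_isConstructible
      (isConstructible_range_comap_aeval a) hbot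
    refine ⟨g, hg0, nilpotent_iff_mem_prime.mpr fun J hJ => ?_⟩
    simpa [φ] using hg ⟨⟨J, hJ⟩, rfl⟩

end Polynomial

theorem stmt_1_general (K K' A : Type*) [Field K] [IsAlgClosed K]
    [Field K'] [Algebra K K']
    [CommRing A] [Algebra K' A] [Algebra.FiniteType K' A]
    (a : A) (ha : ∀ t : K, IsUnit (a - algebraMap K' A (algebraMap K K' t))) :
    ∃ p : Polynomial K', p ≠ 0 ∧ IsNilpotent (Polynomial.aeval a p) := by
  refine exists_isNilpotent_aeval_of_infinite_setOf_isUnit a ?_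
  refine (Set.infinite_range_of_injective (algebraMap K K').injective).mono ?_
  rintro _ ⟨t, rfl⟩
  exact ha t

/-- Let `K'` be an algebraically closed field and `K ⊆ K'` an algebraically closed subfield.
Let `A` be a finitely generated commutative `K'`-algebra and `a ∈ A` an element such that
`a - t • 1` is a unit of `A` for every `t ∈ K`. Then there exists a nonzero polynomial
`p ∈ K'[X]` such that `p(a)` is nilpotent in `A`. -/
theorem stmt_1 (K K' A : Type*) [Field K] [IsAlgClosed K]
    [Field K'] [IsAlgClosed K'] [Algebra K K']
    [CommRing A] [Algebra K' A] [Algebra.FiniteType K' A]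
    (a : A) (ha : ∀ t : K, IsUnit (a - algebraMap K' A (algebraMap K K' t))) :
    ∃ p : Polynomial K', p ≠ 0 ∧ IsNilpotent (Polynomial.aeval a p) :=
  stmt_1_general K K' A a ha
end

section
/- Let K be a field and let (A, ⊗, 𝟙) be a K-linear abelian monoidal category satisfying: (i) the unit object 𝟙 is a simple object; (ii) End(𝟙) = K; (iii) for every object X of A, the K-vector space Hom(𝟙, X) is finite-dimensional; (iv) the tensor product ⊗ is exact in each variable. Then for all objects M and N of A, the canonical K-linear map Hom(𝟙, M) ⊗_K Hom(𝟙, N) → Hom(𝟙, M ⊗ N), which sends f ⊗ g to the composite 𝟙 ≅ 𝟙 ⊗ 𝟙 →(f ⊗ g) M ⊗ N (using the unit isomorphism), is injective. -/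
/-!
Expand `t` in a basis `(gᵢ)` of `Hom(𝟙, N)`, so that `Φ t = 0` says `∑ fᵢ ⊗ gᵢ = 0`, and induct on
the number of terms, for all `M` at once. If some `fₐ ≠ 0`, it is a monomorphism because `𝟙` is
simple. Composing the relation with `π ▷ N`, where `π` is the cokernel of `fₐ`, the induction
hypothesis gives `fᵢ ≫ π = 0`, hence `fᵢ = kᵢ • fₐ` since `End 𝟙 = K`. The relation becomes
`fₐ ⊗ (gₐ + ∑ kᵢ gᵢ) = 0`, which is absurd: the second factor is nonzero by linear independence,
and a tensor product of monomorphisms out of `𝟙` is a monomorphism out of the nonzero `𝟙 ⊗ 𝟙`.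
-/

open CategoryTheory CategoryTheory.MonoidalCategory CategoryTheory.Limits
open scoped TensorProduct

namespace CategoryTheory

variable {C : Type*} [Category C]

theorem Abelian.exists_eq_smul_of_comp_cokernel_π_eq_zero {K : Type*} [Semiring K] [Abelian C]
    [Linear K C] {X M : C} (hEnd : Function.Surjective (fun k : K => k • 𝟙 X))
    (f : X ⟶ M) [Mono f] {g : X ⟶ M} (hg : g ≫ cokernel.π f = 0) : ∃ k : K, g = k • f := by
  obtain ⟨k, hk⟩ := hEnd (Abelian.monoLift f g hg)
  refine ⟨k, ?_⟩
  rw [← Abelian.monoLift_comp f g hg, ← hk, Linear.smul_comp, Category.id_comp]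

namespace MonoidalCategory

variable [MonoidalCategory C]

theorem mono_tensorHom {X Y X' Y' : C} (f : X ⟶ Y) (g : X' ⟶ Y') [Mono f] [Mono g]
    [(tensorRight X').PreservesMonomorphisms] [(tensorLeft Y).PreservesMonomorphisms] :
    Mono (f ⊗ₘ g) := by
  rw [tensorHom_def]
  have : Mono (f ▷ X') := (tensorRight X').map_mono f
  have : Mono (Y ◁ g) := (tensorLeft Y).map_mono g
  exact mono_comp _ _

variable [Preadditive C] [HasKernels C] [Simple (𝟙_ C)]
  [∀ X : C, (tensorLeft X).PreservesMonomorphisms]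
  [∀ X : C, (tensorRight X).PreservesMonomorphisms]

theorem tensorHom_ne_zero_of_unit {M N : C} {f : 𝟙_ C ⟶ M} {g : 𝟙_ C ⟶ N} (hf : f ≠ 0)
    (hg : g ≠ 0) : f ⊗ₘ g ≠ 0 := by
  have := mono_of_nonzero_from_simple hf
  have := mono_of_nonzero_from_simple hg
  have := mono_tensorHom f g
  intro h
  exact Simple.not_isZero (𝟙_ C) ((λ_ (𝟙_ C)).isZero_iff.mp (IsZero.of_mono_eq_zero _ h))

end MonoidalCategory

theorem eq_zero_of_sum_tensorHom_eq_zero {K : Type*} [Ring K] [Nontrivial K] [Abelian C]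
    [Linear K C] [MonoidalCategory C] [MonoidalPreadditive C] [MonoidalLinear K C]
    [Simple (𝟙_ C)] (hEnd : Function.Surjective (fun k : K => k • 𝟙 (𝟙_ C)))
    [∀ X : C, (tensorLeft X).PreservesMonomorphisms]
    [∀ X : C, (tensorRight X).PreservesMonomorphisms]
    {ι : Type*} {N : C} {g : ι → (𝟙_ C ⟶ N)} (hg : LinearIndependent K g) (s : Finset ι)
    {M : C} (f : ι → (𝟙_ C ⟶ M)) (h : ∑ i ∈ s, f i ⊗ₘ g i = 0) : ∀ i ∈ s, f i = 0 := by
  classical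
  induction s using Finset.induction_on generalizing M with
  | empty => simp
  | insert a s ha ih =>
    rw [Finset.sum_insert ha] at h
    suffices hfa : f a = 0 by
      rw [hfa, MonoidalPreadditive.zero_tensor, zero_add] at h
      simpa [hfa] using ih f h
    by_contra hfa
    have := mono_of_nonzero_from_simple hfa
    have hπ : ∀ i ∈ s, f i ≫ cokernel.π (f a) = 0 := by
      refine ih (fun i => f i ≫ cokernel.π (f a)) ?_
      have := congrArg (· ≫ cokernel.π (f a) ▷ N) h
      simpa [Preadditive.sum_comp, tensorHom_comp_whiskerRight] using this
    choose! k hk using fun i hi =>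
      Abelian.exists_eq_smul_of_comp_cokernel_π_eq_zero hEnd (f a) (hπ i hi)
    have hg' : g a + ∑ i ∈ s, k i • g i ≠ 0 := by
      intro h0
      apply hg.notMem_span_image (s := ↑s) ha
      rw [eq_neg_of_add_eq_zero_left h0]
      exact neg_mem (Submodule.sum_mem _ fun i hi =>
        Submodule.smul_mem _ _ (Submodule.subset_span ⟨i, hi, rfl⟩))
    apply tensorHom_ne_zero_of_unit hfa hg'
    rw [MonoidalPreadditive.tensor_add, tensor_sum, ← h]
    congr 1
    refine Finset.sum_congr rfl fun i hi => ?_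
    simp [hk i hi, MonoidalCategory.tensorHom_def]

end CategoryTheory

/-- Let `K` be a field and `(C, ⊗, 𝟙_ C)` a `K`-linear abelian monoidal category such that:
(i) the unit object `𝟙_ C` is simple; (ii) `End (𝟙_ C) = K`; (iii) `Hom(𝟙_ C, X)` is
finite-dimensional over `K` for every `X`; (iv) the tensor product is exact in each variable.
Then for all objects `M`, `N`, the canonical `K`-linear map
`Hom(𝟙_ C, M) ⊗[K] Hom(𝟙_ C, N) → Hom(𝟙_ C, M ⊗ N)`, sending `f ⊗ g` to the composite
`𝟙_ C ≅ 𝟙_ C ⊗ 𝟙_ C ⟶ M ⊗ N`, is injective. -/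
theorem stmt_2 (K : Type*) [Field K] (C : Type*) [Category C] [Abelian C]
    [Linear K C] [MonoidalCategory C] [MonoidalPreadditive C] [MonoidalLinear K C]
    (hsimple : Simple (𝟙_ C))
    (hEnd : Function.Bijective (fun k : K => k • (𝟙 (𝟙_ C))))
    (hfin : ∀ X : C, FiniteDimensional K ((𝟙_ C) ⟶ X))
    [∀ X : C, PreservesFiniteLimits (tensorLeft X)]
    [∀ X : C, PreservesFiniteColimits (tensorLeft X)]
    [∀ X : C, PreservesFiniteLimits (tensorRight X)]
    [∀ X : C, PreservesFiniteColimits (tensorRight X)]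
    (M N : C)
    (Φ : (((𝟙_ C) ⟶ M) ⊗[K] ((𝟙_ C) ⟶ N)) →ₗ[K] ((𝟙_ C) ⟶ M ⊗ N))
    (hΦ : ∀ (f : (𝟙_ C) ⟶ M) (g : (𝟙_ C) ⟶ N),
      Φ (f ⊗ₜ[K] g) = (λ_ (𝟙_ C)).inv ≫ (f ⊗ₘ g)) :
    Function.Injective Φ := by
  have := hsimple
  let b := Module.Basis.ofVectorSpace K ((𝟙_ C) ⟶ N)
  rw [injective_iff_map_eq_zero]
  intro t ht
  obtain ⟨d, rfl⟩ := TensorProduct.eq_repr_basis_right b t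
  have hsum : ∑ i ∈ d.support, d i ⊗ₘ b i = 0 := by
    rw [← cancel_epi (λ_ (𝟙_ C)).inv, comp_zero, Preadditive.comp_sum, ← ht]
    simp [Finsupp.sum, hΦ]
  have hd := eq_zero_of_sum_tensorHom_eq_zero hEnd.2 b.linearIndependent _ _ hsum
  have : d = 0 := Finsupp.ext fun i => by_contra fun h => h (hd i (Finsupp.mem_support_iff.2 h))
  simp [this]
end

section
/- Let K be a field and let (A, ⊗, 𝟙) be a K-linear abelian monoidal category satisfying: (i) the unit object 𝟙 is a simple object; (ii) End(𝟙) = K; (iii) for every object X of A, the K-vector space Hom(𝟙, X) is finite-dimensional; (iv) the tensor product ⊗ is exact in each variable. Then for every object M of A, the canonical evaluation morphism Hom(𝟙, M) ⊗_K 𝟙 → M is a monomorphism. Here Hom(𝟙, M) ⊗_K 𝟙 denotes the direct sum of dim_K Hom(𝟙, M) copies of 𝟙, and the morphism restricts on the copy of 𝟙 indexed by a basis vector f ∈ Hom(𝟙, M) to the morphism f. -/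
open CategoryTheory CategoryTheory.MonoidalCategory CategoryTheory.Limits

attribute [local instance] CategoryTheory.Abelian.hasFiniteBiproducts

/-!
The kernel `N` of the evaluation map `𝟙^ι → M` admits no nonzero morphism from `𝟙`: such a
morphism is a tuple of scalars (as `End 𝟙 = K`) killed by the basis `b`, hence zero. A subobject
`N` of `S^ι`, with `S` simple, which admits no nonzero morphism from `S` vanishes: by induction
on the size of `ι`, a projection `N → S` is either zero, so that `N` embeds into `S^(ι \ {i})`, or an
epimorphism whose kernel vanishes by induction, making `N ≅ S`.
-/

section

variable {C : Type*} [Category C]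

theorem exists_mono_to_biproduct_ne_of_comp_π_eq_zero [HasZeroMorphisms C] {J : Type*}
    (f : J → C) [HasBiproduct f] (i : J) [HasBiproduct fun j : {j // j ≠ i} => f j] {P : C}
    (g : P ⟶ ⨁ f) [Mono g] (hg : g ≫ biproduct.π f i = 0) :
    ∃ l : P ⟶ ⨁ fun j : {j // j ≠ i} => f j, Mono l := by
  have : HasBiproduct (Subtype.restrict (· ≠ i) f) := ‹HasBiproduct fun j : {j // j ≠ i} => f j›
  obtain ⟨l, hl⟩ := KernelFork.IsLimit.lift' (biproduct.isLimitFromSubtype f i) g hg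
  exact ⟨l, mono_of_mono_fac hl⟩

theorem isZero_of_mono_to_biproduct_of_simple [Abelian C] (S : C) [Simple S] {ι : Type}
    [Finite ι] {N : C} (h : N ⟶ ⨁ fun _ : ι => S) [Mono h] (hN : ∀ g : S ⟶ N, g = 0) :
    IsZero N := by
  obtain ⟨n, hn⟩ : ∃ n, Nat.card ι = n := ⟨_, rfl⟩
  induction n generalizing ι N with
  | zero =>
    have : IsEmpty ι := Finite.card_eq_zero_iff.mp hn
    exact .of_mono h <| (IsZero.iff_id_eq_zero _).2 <| biproduct.hom_ext _ _ isEmptyElim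
  | succ n ih =>
    obtain ⟨i⟩ : Nonempty ι := (Nat.card_pos_iff.1 (hn ▸ n.succ_pos)).1
    have hcard : Nat.card {j // j ≠ i} = n := by
      classical
      have := Nat.card_congr (Equiv.optionSubtypeNe i)
      rw [Finite.card_option] at this
      omega
    have of_π_eq_zero : ∀ {P : C} (g : P ⟶ ⨁ fun _ : ι => S) [Mono g],
        g ≫ biproduct.π _ i = 0 → (∀ g : S ⟶ P, g = 0) → IsZero P := fun g _ hg hP => by
      obtain ⟨l, hl⟩ := exists_mono_to_biproduct_ne_of_comp_π_eq_zero _ i g hg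
      exact ih l hP hcard
    set q := h ≫ biproduct.π _ i
    by_cases hq : q = 0
    · exact of_π_eq_zero h hq hN
    have : Epi q := epi_of_nonzero_to_simple hq
    have hker : IsZero (kernel q) := of_π_eq_zero (kernel.ι q ≫ h)
      (by rw [Category.assoc, kernel.condition]) fun g => by
        rw [← cancel_mono (kernel.ι q), zero_comp]
        exact hN _
    have : Mono q := Preadditive.mono_of_isZero_kernel _ hker
    have : IsIso q := isIso_of_mono_of_epi q
    exact absurd (by rw [← IsIso.inv_hom_id q, hN (inv q), zero_comp]) (id_nonzero S)

variable {K : Type*} [Ring K]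

theorem eq_zero_of_comp_biproduct_desc_eq_zero [Preadditive C] [Linear K C] {S M : C}
    (hS : Function.Surjective fun k : K => k • 𝟙 S) {ι : Type} [Fintype ι]
    [HasBiproduct fun _ : ι => S] {b : ι → (S ⟶ M)} (hb : LinearIndependent K b)
    {c : S ⟶ ⨁ fun _ : ι => S} (hc : c ≫ biproduct.desc b = 0) : c = 0 := by
  choose k hk using fun i => hS (c ≫ biproduct.π _ i)
  simp only at hk
  have hsum : ∑ i, k i • b i = 0 := by
    rw [← hc, biproduct.desc_eq, Preadditive.comp_sum]
    refine Finset.sum_congr rfl fun i _ => ?_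
    rw [← Category.assoc, ← hk i, Linear.smul_comp, Category.id_comp]
  have hk0 : ∀ i, k i = 0 := Fintype.linearIndependent_iff.mp hb k hsum
  refine biproduct.hom_ext _ _ fun i => ?_
  rw [← hk i, hk0 i, zero_smul, zero_comp]

theorem mono_biproduct_desc_of_linearIndependent [Abelian C] [Linear K C] {S M : C} [Simple S]
    (hS : Function.Surjective fun k : K => k • 𝟙 S) {ι : Type} [Fintype ι]
    {b : ι → (S ⟶ M)} (hb : LinearIndependent K b) : Mono (biproduct.desc b) :=
  Preadditive.mono_of_isZero_kernel _ <| isZero_of_mono_to_biproduct_of_simple S (kernel.ι _)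
    fun g => by
      rw [← cancel_mono (kernel.ι _), zero_comp]
      exact eq_zero_of_comp_biproduct_desc_eq_zero hS hb (by simp)

end

/-- Let `K` be a field and `(C, ⊗, 𝟙_ C)` a `K`-linear abelian monoidal category such that:
(i) the unit object `𝟙_ C` is simple; (ii) `End (𝟙_ C) = K`; (iii) `Hom(𝟙_ C, X)` is
finite-dimensional over `K` for every `X`; (iv) the tensor product is exact in each variable.
Then for every object `M`, the canonical evaluation morphism
`Hom(𝟙_ C, M) ⊗_K 𝟙_ C → M` is a monomorphism.  Here `Hom(𝟙_ C, M) ⊗_K 𝟙_ C` is realized as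
the biproduct of copies of `𝟙_ C` indexed by a basis `b` of the finite-dimensional vector
space `Hom(𝟙_ C, M)`, and the morphism restricts on the copy indexed by `i` to `b i`. -/
theorem stmt_3 (K : Type*) [Field K] (C : Type*) [Category C] [Abelian C]
    [Linear K C] [MonoidalCategory C] [MonoidalPreadditive C] [MonoidalLinear K C]
    (hsimple : Simple (𝟙_ C))
    (hEnd : Function.Bijective (fun k : K => k • (𝟙 (𝟙_ C))))
    (hfin : ∀ X : C, FiniteDimensional K ((𝟙_ C) ⟶ X))
    [∀ X : C, PreservesFiniteLimits (tensorLeft X)]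
    [∀ X : C, PreservesFiniteColimits (tensorLeft X)]
    [∀ X : C, PreservesFiniteLimits (tensorRight X)]
    [∀ X : C, PreservesFiniteColimits (tensorRight X)]
    (M : C) (ι : Type) [Fintype ι] (b : Module.Basis ι K ((𝟙_ C) ⟶ M)) :
    Mono (biproduct.desc (f := fun _ : ι => 𝟙_ C) (fun i => b i)) :=
  mono_biproduct_desc_of_linearIndependent hEnd.surjective b.linearIndependent
end

section
/- Let 𝐀 and 𝐁 be abelian categories and let F : 𝐀 → 𝐁 be an exact and fully faithful functor. Assume that every object of 𝐀 has finite length, and that F(M) is a simple object of 𝐁 for every simple object M of 𝐀. Then the essential image of F is closed under subquotients: if X is an object of 𝐁 isomorphic to F(N) for some N in 𝐀, then every subobject of X and every quotient object of X is isomorphic to F(N') for some object N' of 𝐀. -/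
/-!
Induct along a composition series: let `S ⊆ N` be simple and `Y ⊆ F N`. Since `F S` is simple,
`Y ∩ F S` is either `0` or `F S`. In the first case `Y` embeds into `F (N / S)`; in the second,
`F N / Y` is a quotient of `F (N / S)`. Both cases fall to the induction hypothesis, because the
essential image of a fully faithful exact functor is closed under kernels and cokernels, so that for an
object of the image all subobjects lie in the image iff all quotients do.
-/

open CategoryTheory CategoryTheory.Limits

/-- An object of an abelian category has finite length if it admits a finite filtration with
simple subquotients: either it is zero, or it admits a simple subobject whose cokernel has
finite length. -/
inductive HasFiniteLength {A : Type*} [Category A] [Abelian A] : A → Prop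
  | of_isZero {X : A} (h : IsZero X) : HasFiniteLength X
  | of_simple_subobject {S X : A} (hS : Simple S) (f : S ⟶ X) (hf : Mono f)
      (h : HasFiniteLength (cokernel f)) : HasFiniteLength X

namespace CategoryTheory.ObjectProperty

variable {C : Type*} [Category C]

instance isClosedUnderKernels_of_isClosedUnderLimitsOfShape [HasZeroMorphisms C]
    (P : ObjectProperty C) [P.IsClosedUnderLimitsOfShape WalkingParallelPair] :
    P.IsClosedUnderKernels where
  kernels_le := by
    rintro _ ⟨f, k, hk, hX, hY⟩
    exact P.prop_of_isLimit hk (by rintro (_ | _) <;> assumption)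

instance isClosedUnderCokernels_of_isClosedUnderColimitsOfShape [HasZeroMorphisms C]
    (P : ObjectProperty C) [P.IsClosedUnderColimitsOfShape WalkingParallelPair] :
    P.IsClosedUnderCokernels where
  cokernels_le := by
    rintro _ ⟨f, k, hk, hX, hY⟩
    exact P.prop_of_isColimit hk (by rintro (_ | _) <;> assumption)

variable [Abelian C] (P : ObjectProperty C)

lemma prop_of_mono_of_prop_cokernel [P.IsClosedUnderKernels] {X Y : C} (f : Y ⟶ X) [Mono f]
    (hX : P X) (hf : P (cokernel f)) : P Y :=
  P.prop_of_isLimit_kernelFork (Abelian.monoIsKernelOfCokernel _ (cokernelIsCokernel f)) hX hf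

lemma prop_of_epi_of_prop_kernel [P.IsClosedUnderCokernels] {X Y : C} (f : X ⟶ Y) [Epi f]
    (hX : P X) (hf : P (kernel f)) : P Y :=
  P.prop_of_isColimit_cokernelCofork (Abelian.epiIsCokernelOfKernel _ (kernelIsKernel f)) hf hX

lemma prop_of_epi_of_forall_mono [P.IsClosedUnderCokernels] {X Y : C}
    (hsub : ∀ (Z : C) (i : Z ⟶ X), Mono i → P Z) (hX : P X) (f : X ⟶ Y) [Epi f] : P Y :=
  P.prop_of_epi_of_prop_kernel f hX (hsub _ (kernel.ι f) inferInstance)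

end CategoryTheory.ObjectProperty

lemma CategoryTheory.Abelian.exists_fac_or_mono_comp_of_simple {C : Type*} [Category C]
    [Abelian C] {S X Y Z : C} [Simple S] {g : S ⟶ X} {p : X ⟶ Z} {w : g ≫ p = 0}
    (hg : IsLimit (KernelFork.ofι g w)) (f : Y ⟶ X) [Mono f] :
    (∃ u : S ⟶ Y, u ≫ f = g) ∨ Mono (f ≫ p) := by
  obtain ⟨m, hm⟩ : ∃ m : kernel (f ≫ p) ⟶ S, m ≫ g = kernel.ι (f ≫ p) ≫ f :=
    ⟨_, (KernelFork.IsLimit.lift' hg _ (by rw [Category.assoc, kernel.condition])).2⟩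
  have : Mono m := mono_of_mono_fac hm
  by_cases hm0 : m = 0
  · right
    apply Preadditive.mono_of_kernel_zero
    rw [← cancel_mono f, zero_comp, ← hm, hm0, zero_comp]
  · left
    have : IsIso m := isIso_of_mono_of_nonzero hm0
    exact ⟨inv m ≫ kernel.ι (f ≫ p), by rw [Category.assoc, ← hm, IsIso.inv_hom_id_assoc]⟩

theorem essImage_of_mono_of_hasFiniteLength {A B : Type*} [Category A] [Category B] [Abelian A]
    [Abelian B] (F : A ⥤ B) [F.Full] [F.Faithful] [PreservesFiniteLimits F]
    [PreservesFiniteColimits F] (hsimple : ∀ X : A, Simple X → Simple (F.obj X))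
    {N : A} (hN : HasFiniteLength N) : ∀ (Y : B) (f : Y ⟶ F.obj N), Mono f → F.essImage Y := by
  induction hN with
  | of_isZero hN =>
    intro Y f _
    exact ⟨_, ⟨(F.map_isZero hN).iso (IsZero.of_mono f (F.map_isZero hN))⟩⟩
  | @of_simple_subobject S N hS g _ _ ih =>
    intro Y f _
    have := hsimple S hS
    have hw : F.map g ≫ F.map (cokernel.π g) = 0 := by
      rw [← F.map_comp, cokernel.condition, F.map_zero]
    have hker : IsLimit (KernelFork.ofι (F.map g) hw) :=
      KernelFork.mapIsLimit _ (Abelian.monoIsKernelOfCokernel _ (cokernelIsCokernel g)) F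
    have hcok : IsColimit (CokernelCofork.ofπ (F.map (cokernel.π g)) hw) :=
      CokernelCofork.mapIsColimit _ (cokernelIsCokernel g) F
    rcases Abelian.exists_fac_or_mono_comp_of_simple hker f with ⟨u, hu⟩ | hmono
    · obtain ⟨h, hh⟩ := CokernelCofork.IsColimit.desc' hcok (cokernel.π f)
        (by rw [← hu, Category.assoc, cokernel.condition, comp_zero])
      have : Epi h := epi_of_epi_fac hh
      exact F.essImage.prop_of_mono_of_prop_cokernel f (F.obj_mem_essImage N)
        (F.essImage.prop_of_epi_of_forall_mono ih (F.obj_mem_essImage _) h)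
    · exact ih Y _ hmono

/-- Let `𝐀`, `𝐁` be abelian categories and `F : 𝐀 ⥤ 𝐁` an exact, fully faithful functor.
Assume every object of `𝐀` has finite length and that `F` sends simple objects to simple
objects.  Then the essential image of `F` is closed under subquotients: if `X ≅ F N` for
some `N`, then every subobject and every quotient object of `X` lies in the essential image
of `F`. -/
theorem stmt_5 {A B : Type*} [Category A] [Category B] [Abelian A] [Abelian B]
    (F : A ⥤ B) [F.Full] [F.Faithful]
    [PreservesFiniteLimits F] [PreservesFiniteColimits F]
    (hlen : ∀ X : A, HasFiniteLength X)
    (hsimple : ∀ X : A, Simple X → Simple (F.obj X))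
    (X : B) (hX : ∃ N : A, Nonempty (X ≅ F.obj N)) :
    (∀ (Y : B) (f : Y ⟶ X), Mono f → ∃ N' : A, Nonempty (Y ≅ F.obj N')) ∧
    (∀ (Y : B) (f : X ⟶ Y), Epi f → ∃ N' : A, Nonempty (Y ≅ F.obj N')) := by
  obtain ⟨N, ⟨e⟩⟩ := hX
  have hsub : ∀ (Y : B) (f : Y ⟶ X), Mono f → F.essImage Y := fun Y f _ =>
    essImage_of_mono_of_hasFiniteLength F hsimple (hlen N) Y (f ≫ e.hom) inferInstance
  have hquot (Y : B) (f : X ⟶ Y) [Epi f] : F.essImage Y :=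
    F.essImage.prop_of_epi_of_forall_mono hsub ⟨N, ⟨e.symm⟩⟩ f
  have hiso (Y : B) : F.essImage Y → ∃ N' : A, Nonempty (Y ≅ F.obj N') :=
    fun ⟨N', ⟨e'⟩⟩ => ⟨N', ⟨e'.symm⟩⟩
  exact ⟨fun Y f hf => hiso Y (hsub Y f hf), fun Y f _ => hiso Y (hquot Y f)⟩
end
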